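/- The Laplacian matrix of the contracted multigraph K_{n_1,...,n_s}/F equals diag(α_1,...,α_c) + Nᵀ(I_s − J_s)N, where N is the s×c matrix with entries n_{ip}, J_s is the s×s all-ones matrix, and α_p = n·m_p − Σ_i n_i·n_{ip}. -/

import Mathlib

open Finset

/-- `m_p = |V(T_p)|`: the number of vertices of `K_{n_1,…,n_s}` lying in the `p`-th component
of a spanning forest, where `comp` sends each vertex to the index of its component. -/
noncomputable def mP {s c : ℕ} (n : Fin s → ℕ) (comp : (Σ i, Fin (n i)) → Fin c)
    (p : Fin c) : ℕ :=
  Nat.card {v : Σ i, Fin (n i) // comp v = p}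

/-- `n_{ip} = |X_i ∩ V(T_p)|`: the number of vertices of the `i`-th partition class lying in
the `p`-th component. -/
noncomputable def nIP {s c : ℕ} (n : Fin s → ℕ) (comp : (Σ i, Fin (n i)) → Fin c)
    (i : Fin s) (p : Fin c) : ℕ :=
  Nat.card {v : Σ i, Fin (n i) // v.1 = i ∧ comp v = p}

/-- `α_p = n·m_p − Σ_i n_i·n_{ip}` (as a real number). -/
noncomputable def alphaR {s c : ℕ} (n : Fin s → ℕ) (comp : (Σ i, Fin (n i)) → Fin c)
    (p : Fin c) : ℝ :=
  (∑ i, (n i : ℝ)) * (mP n comp p) - ∑ i, (n i : ℝ) * (nIP n comp i p)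

/-- The number of edges of `K_{n_1,…,n_s}` with one endpoint in component `p` and the other in
component `q` (for `p ≠ q`), counted as ordered pairs with first coordinate in `T_p`. -/
noncomputable def wPQ {s c : ℕ} (n : Fin s → ℕ) (comp : (Σ i, Fin (n i)) → Fin c)
    (p q : Fin c) : ℕ :=
  Nat.card {uv : (Σ i, Fin (n i)) × (Σ i, Fin (n i)) //
    comp uv.1 = p ∧ comp uv.2 = q ∧
      (SimpleGraph.completeMultipartiteGraph (fun i => Fin (n i))).Adj uv.1 uv.2}

/-- The Laplacian matrix of the contracted multigraph `K_{n_1,…,n_s}/F`: diagonal entries are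
the degrees (with multiplicity), off-diagonal entries are minus the edge multiplicities. -/
noncomputable def LapCon {s c : ℕ} (n : Fin s → ℕ) (comp : (Σ i, Fin (n i)) → Fin c) :
    Matrix (Fin c) (Fin c) ℝ :=
  Matrix.of fun p q =>
    if p = q then ∑ q' ∈ Finset.univ.erase p, (wPQ n comp p q' : ℝ) else -(wPQ n comp p q : ℝ)

/-!
Every entry is a count of ordered pairs of vertices. The pairs in `T_p × T_q` either lie in
different classes (the `w_pq` edges) or in a common class `X_i` (`Σ_i n_ip n_iq` of them), so
`w_pq = m_p m_q - (NᵀN)_pq = -(Nᵀ(I - J)N)_pq`. Summing `w_pq` over all `q`, including the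
loops `q = p` removed by the contraction, counts the pairs from `T_p` to a vertex in a different class,
which is `α_p = n m_p - Σ_i n_i n_ip`.
-/

open scoped Matrix

theorem Finset.card_filter_product_eq_sum_mul {α β γ : Type*} [Fintype γ] [DecidableEq γ]
    (s : Finset α) (t : Finset β) (f : α → γ) (g : β → γ) :
    #{x ∈ s ×ˢ t | f x.1 = g x.2} = ∑ k, #{a ∈ s | f a = k} * #{b ∈ t | g b = k} := by
  rw [card_eq_sum_card_fiberwise (f := fun x => f x.1) fun _ _ => mem_univ _]
  refine sum_congr rfl fun k _ => ?_
  rw [← card_product, ← filter_product, filter_filter]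
  congr 1 with x
  simp only [mem_filter]
  grind

theorem Matrix.transpose_mul_one_sub_mul_apply {m ι R : Type*} [Fintype m] [DecidableEq m]
    [CommRing R] (N : Matrix m ι R) (p q : ι) :
    (Nᵀ * ((1 : Matrix m m R) - Matrix.of fun _ _ => 1) * N : Matrix ι ι R) p q =
      ∑ i, N i p * N i q - (∑ i, N i p) * ∑ i, N i q := by
  simp only [Matrix.mul_sub, Matrix.mul_one, Matrix.sub_apply, Matrix.mul_apply,
    Matrix.transpose_apply, Matrix.of_apply, mul_one, sub_mul, sum_sub_distrib, sum_mul]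
  simp only [mul_sum]
  rw [sum_comm]

section

variable {s c : ℕ} (n : Fin s → ℕ) (comp : (Σ i, Fin (n i)) → Fin c)

def componentFinset (p : Fin c) : Finset (Σ i, Fin (n i)) := {v | comp v = p}

@[simp]
theorem mem_componentFinset {p : Fin c} {v : Σ i, Fin (n i)} :
    v ∈ componentFinset n comp p ↔ comp v = p := by
  simp [componentFinset]

theorem mP_eq_card (p : Fin c) : mP n comp p = #(componentFinset n comp p) := by
  rw [mP, Nat.card_eq_fintype_card, Fintype.card_subtype, componentFinset]

theorem nIP_eq_card (i : Fin s) (p : Fin c) : nIP n comp i p = #{v ∈ componentFinset n comp p | v.1 = i} := by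
  rw [nIP, Nat.card_eq_fintype_card, Fintype.card_subtype, componentFinset, filter_filter]
  simp only [and_comm]

theorem wPQ_eq_card (p q : Fin c) :
    wPQ n comp p q =
      #{x ∈ componentFinset n comp p ×ˢ componentFinset n comp q | x.1.1 ≠ x.2.1} := by
  rw [wPQ, Nat.card_eq_fintype_card, Fintype.card_subtype]
  congr 1 with x
  simp [and_assoc]

theorem mP_eq_sum_nIP (p : Fin c) : mP n comp p = ∑ i, nIP n comp i p := by
  simp only [mP_eq_card, nIP_eq_card]
  exact card_eq_sum_card_fiberwise fun _ _ => mem_univ _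

theorem sum_nIP (i : Fin s) : ∑ p, nIP n comp i p = n i := by
  have h : #{v : Σ i, Fin (n i) | v.1 = i} = n i := by
    rw [← Fintype.card_subtype, Fintype.card_congr (Equiv.sigmaSubtype i), Fintype.card_fin]
  simp only [nIP, Nat.card_eq_fintype_card, Fintype.card_subtype, ← h]
  rw [card_eq_sum_card_fiberwise (f := comp) fun _ _ => mem_univ _]
  simp only [filter_filter]

theorem sum_mP : ∑ p, mP n comp p = ∑ i, n i := by
  simp only [mP_eq_sum_nIP]
  rw [sum_comm]
  simp only [sum_nIP]

theorem wPQ_add_sum_nIP_mul_nIP (p q : Fin c) :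
    wPQ n comp p q + ∑ i, nIP n comp i p * nIP n comp i q = mP n comp p * mP n comp q := by
  rw [wPQ_eq_card, mP_eq_card, mP_eq_card, ← card_product,
    ← card_filter_add_card_filter_not (s := _ ×ˢ _) (fun x => x.1.1 ≠ x.2.1)]
  simp only [not_not, card_filter_product_eq_sum_mul, nIP_eq_card]

theorem cast_wPQ (p q : Fin c) :
    (wPQ n comp p q : ℝ) =
      mP n comp p * mP n comp q - ∑ i, (nIP n comp i p : ℝ) * nIP n comp i q := by
  rw [eq_sub_iff_add_eq]
  exact_mod_cast wPQ_add_sum_nIP_mul_nIP n comp p q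

theorem sum_wPQ (p : Fin c) : ∑ q, (wPQ n comp p q : ℝ) = alphaR n comp p := by
  have hm : ∑ q, (mP n comp q : ℝ) = ∑ i, (n i : ℝ) := by exact_mod_cast sum_mP n comp
  have hn (i : Fin s) : ∑ q, (nIP n comp i q : ℝ) = n i := by exact_mod_cast sum_nIP n comp i
  simp only [cast_wPQ, sum_sub_distrib, ← mul_sum, hm]
  rw [sum_comm]
  simp only [← mul_sum, hn, alphaR, mul_comm]

theorem sum_nIP_mul_nIP_sub (p q : Fin c) :
    ∑ i, (nIP n comp i p : ℝ) * nIP n comp i q -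
      (∑ i, (nIP n comp i p : ℝ)) * ∑ i, (nIP n comp i q : ℝ) = -wPQ n comp p q := by
  rw [cast_wPQ]
  push_cast [mP_eq_sum_nIP]
  ring

end

theorem stmt_3_general (s : ℕ) (n : Fin s → ℕ) (c : ℕ) (comp : (Σ i, Fin (n i)) → Fin c) :
    LapCon n comp =
      Matrix.diagonal (alphaR n comp) +
        (Matrix.of fun (i : Fin s) (p : Fin c) => (nIP n comp i p : ℝ)).transpose *
          ((1 : Matrix (Fin s) (Fin s) ℝ) - (Matrix.of fun _ _ => (1 : ℝ) : Matrix (Fin s) (Fin s) ℝ)) *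
          (Matrix.of fun (i : Fin s) (p : Fin c) => (nIP n comp i p : ℝ)) := by
  ext p q
  rw [Matrix.add_apply, Matrix.transpose_mul_one_sub_mul_apply]
  simp only [Matrix.of_apply, sum_nIP_mul_nIP_sub, LapCon]
  rcases eq_or_ne p q with rfl | hpq
  · rw [if_pos rfl, Matrix.diagonal_apply_eq, sum_erase_eq_sub (mem_univ p), sum_wPQ,
      sub_eq_add_neg]
  · rw [if_neg hpq, Matrix.diagonal_apply_ne _ hpq, zero_add]

/-- The Laplacian of the contracted multigraph `K_{n_1,…,n_s}/F` equals
`diag(α_1,…,α_c) + Nᵀ(I_s − J_s)N` where `N = (n_{ip})`. -/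
theorem stmt_3 (s : ℕ) (hs : 2 ≤ s) (n : Fin s → ℕ) (hn : ∀ i, 1 ≤ n i)
    (F : SimpleGraph (Σ i, Fin (n i)))
    (hFG : F ≤ SimpleGraph.completeMultipartiteGraph (fun i => Fin (n i)))
    (hF : F.IsAcyclic)
    (c : ℕ) (comp : (Σ i, Fin (n i)) → Fin c)
    (hcomp : ∀ u v, comp u = comp v ↔ F.Reachable u v)
    (hsurj : Function.Surjective comp) :
    LapCon n comp =
      Matrix.diagonal (alphaR n comp) +
        (Matrix.of fun (i : Fin s) (p : Fin c) => (nIP n comp i p : ℝ)).transpose *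
          ((1 : Matrix (Fin s) (Fin s) ℝ) - (Matrix.of fun _ _ => (1 : ℝ) : Matrix (Fin s) (Fin s) ℝ)) *
          (Matrix.of fun (i : Fin s) (p : Fin c) => (nIP n comp i p : ℝ)) :=
  stmt_3_general s n c comp
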